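/- There is no distributive law of the finite probability distributions monad over the coinductive delay monad: no natural transformation ζ : D_f ∘ D → D ∘ D_f satisfies the four distributive law axioms. -/

import Mathlib

/-!
Let `A = ½·step (now true) + ½·now false` and `ζ A = stepᵏ (now v)`. Naturality along constant
maps and along `not` shows that `ζ` sends `½·stepⁿ (now x) + ½·stepⁿ (now y)` to
`stepⁿ (now (½·x + ½·y))`; the multiplication law of `D_f` then gives the same for the weights
`¼, ¾`.

The multiplication law of `D`, applied to `½·step (now (now true)) + ½·now (step (now false))`,
which flattens to an equal-time mixture, gives `k + j = 1`, where `j` is the delay of `ζ` at the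
image of `v` under `true ↦ now true`, `false ↦ step (now false)`. If `v` is the fair coin, this
image is `A` with `true` and `false` exchanged, so `j = k`, which is impossible.

Otherwise, evaluate `ζ` in two ways, via the multiplication law of `D_f`, at the mixture with
weights `⅛, ⅛, ⅜, ⅜` of `step (now true)`, `now false`, `step (now false)`, `now true`. As
`¼·A + ¾·(not A)` it yields the coin `¼·v + ¾·(not v)`. Grouped by outcome, as
`½·(¼·step (now true) + ¾·now true) + ½·(¾·step (now false) + ¼·now false)`, it yields `½`, `v`
or `not v`, according to the delays (each 0 or 1) of the two halves. Each equation forces `v` to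
be the fair coin.
-/

/-- The coinductive delay monad: `D X` is the final coalgebra of `Y ↦ X ⊕ Y`.
Concretely, an element of `D X` either diverges (`none`), or is of the form
`step^n (now x)`, represented as `some (n, x)`. -/
def Delay (X : Type) : Type := Option (ℕ × X)

namespace Delay

/-- `now : X → D X`. -/
def now {X : Type} (x : X) : Delay X := some (0, x)

/-- `step : D X → D X`. -/
def step {X : Type} : Delay X → Delay X
  | none => none
  | some (n, x) => some (n + 1, x)

/-- The divergent computation, `fix step`. -/
def diverge {X : Type} : Delay X := none

/-- Functorial action of `D`. -/
def map {X Y : Type} (f : X → Y) : Delay X → Delay Y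
  | none => none
  | some (n, x) => some (n, f x)

/-- Monad multiplication `μ : D(D X) → D X`, satisfying `μ (now d) = d` and
`μ (step d) = step (μ d)`. -/
def mu {X : Type} : Delay (Delay X) → Delay X
  | none => none
  | some (_, none) => none
  | some (n, some (m, x)) => some (n + m, x)

end Delay

/-- The finite probability distributions monad with rational probabilities (the free
convex algebra monad): finitely supported functions into `ℚ≥0` summing to `1`. -/
def FinDist (X : Type) : Type :=
  {w : X →₀ NNRat // w.sum (fun _ q => q) = 1}

namespace FinDist

/-- Unit: the point mass at `x`. -/
noncomputable def pure {X : Type} (x : X) : FinDist X :=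
  ⟨Finsupp.single x 1, by simp⟩

/-- Functorial action: pushforward of distributions. -/
noncomputable def map {X Y : Type} (f : X → Y) (d : FinDist X) : FinDist Y :=
  ⟨Finsupp.mapDomain f d.1, by
    rw [Finsupp.sum_mapDomain_index (fun _ => rfl) (fun _ _ _ => rfl)]
    exact d.2⟩

/-- Multiplication: weighted average of distributions. -/
noncomputable def mu {X : Type} (D : FinDist (FinDist X)) : FinDist X :=
  ⟨D.1.sum (fun d q => q • d.1), by
    classical
    rw [Finsupp.sum_sum_index (fun _ => rfl) (fun _ _ _ => rfl)]
    calc ((D.1.sum fun a b => (b • a.1).sum fun _ q => q) : NNRat)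
        = D.1.sum fun _ b => b :=
          Finsupp.sum_congr fun d _ => by
            rw [Finsupp.sum_smul_index (fun _ => rfl), ← Finsupp.mul_sum, d.2, mul_one]
      _ = 1 := D.2⟩

end FinDist


namespace Delay

variable {X Y : Type}

def after (n : ℕ) (x : X) : Delay X := some (n, x)

@[simp]
lemma map_after (f : X → Y) (n : ℕ) (x : X) : map f (after n x) = after n (f x) := rfl

@[simp]
lemma mu_after_after (n m : ℕ) (x : X) : mu (after n (after m x)) = after (n + m) x := rfl

lemma after_inj {n m : ℕ} {x y : X} : after n x = after m y ↔ n = m ∧ x = y :=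
  Option.some_inj.trans Prod.mk_inj

lemma map_eq_after {f : X → Y} {d : Delay X} {n : ℕ} {y : Y} :
    map f d = after n y ↔ ∃ x, d = after n x ∧ f x = y := by
  refine ⟨fun hd => ?_, fun ⟨x, hd, hx⟩ => hd ▸ hx ▸ rfl⟩
  match d, hd with
  | none, hd => cases hd
  | some (m, x), hd =>
    obtain ⟨rfl, rfl⟩ := after_inj.mp hd
    exact ⟨x, rfl, rfl⟩

lemma mu_eq_after {d : Delay (Delay X)} {n : ℕ} {x : X} :
    mu d = after n x ↔ ∃ k j, d = after k (after j x) ∧ k + j = n := by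
  refine ⟨fun hd => ?_, fun ⟨k, j, hd, hkj⟩ => hd ▸ hkj ▸ rfl⟩
  match d, hd with
  | none, hd => cases hd
  | some (_, none), hd => cases hd
  | some (k, some (j, y)), hd =>
    obtain ⟨rfl, rfl⟩ := after_inj.mp hd
    exact ⟨k, j, rfl, rfl⟩

end Delay

namespace FinDist

variable {X Y : Type}

lemma ext {d e : FinDist X} (h : ∀ x, d.1 x = e.1 x) : d = e := Subtype.ext (Finsupp.ext h)

noncomputable def mix (p q : ℚ≥0) (x y : X) (h : p + q = 1 := by norm_num) : FinDist X :=
  ⟨Finsupp.single x p + Finsupp.single y q, by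
    rw [Finsupp.sum_add_index' (fun _ => rfl) (fun _ _ _ => rfl),
      Finsupp.sum_single_index rfl, Finsupp.sum_single_index rfl, h]⟩

variable {p q : ℚ≥0} {h : p + q = 1}

open Classical in
lemma mix_apply (x y z : X) :
    (mix p q x y h).1 z = (if x = z then p else 0) + (if y = z then q else 0) := by
  simp [mix, Finsupp.single_apply]

open Classical in
lemma pure_apply (x z : X) : (pure x).1 z = if x = z then 1 else 0 := by
  simp [pure, Finsupp.single_apply]

lemma mu_mix_apply (s t : FinDist X) (z : X) :
    (mu (mix p q s t h)).1 z = p * s.1 z + q * t.1 z := by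
  show (Finsupp.sum (Finsupp.single s p + Finsupp.single t q) fun d q => q • d.1) z = _
  rw [Finsupp.sum_add_index' (fun d => zero_smul _ d.1) (fun d _ _ => add_smul _ _ d.1),
    Finsupp.sum_single_index (zero_smul _ s.1), Finsupp.sum_single_index (zero_smul _ t.1)]
  rfl

lemma map_mix (f : X → Y) (x y : X) : map f (mix p q x y h) = mix p q (f x) (f y) h :=
  Subtype.ext <| by simp [map, mix, Finsupp.mapDomain_add, Finsupp.mapDomain_single]

lemma mix_comm (x y : X) (h' : q + p = 1) : mix p q x y h = mix q p y x h' :=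
  Subtype.ext (add_comm _ _)

lemma mix_self (x : X) : mix p q x x h = pure x :=
  Subtype.ext <| by simp only [mix, pure, ← Finsupp.single_add, h]

lemma map_const (d : FinDist X) (y : Y) : map (fun _ => y) d = pure y := by
  refine Subtype.ext ?_
  show Finsupp.mapDomain _ d.1 = Finsupp.single y 1
  rw [Finsupp.mapDomain, Finsupp.sum, ← Finsupp.single_finsetSum]
  exact congrArg _ d.2

lemma mu_map_pure (d : FinDist X) : mu (map pure d) = d := by
  refine Subtype.ext ?_
  show (Finsupp.mapDomain pure d.1).sum (fun e q => q • e.1) = d.1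
  rw [Finsupp.sum_mapDomain_index (fun e => zero_smul _ e.1) (fun e _ _ => add_smul _ _ e.1)]
  simp [pure]

lemma mu_mix_half_mix_half_pure (x y : X) :
    mu (mix (1/2) (1/2) (mix (1/2) (1/2) x y) (pure y)) = mix (1/4) (3/4) x y := by
  classical
  refine ext fun z => ?_
  simp only [mu_mix_apply, mix_apply, pure_apply]
  split_ifs <;> norm_num

lemma mu_mix_quarter_eq_mu_mix_half (a b c d : X) :
    mu (mix (1/4) (3/4) (mix (1/2) (1/2) a b) (mix (1/2) (1/2) c d))
      = mu (mix (1/2) (1/2) (mix (1/4) (3/4) a d) (mix (3/4) (1/4) c b)) := by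
  classical
  refine ext fun z => ?_
  simp only [mu_mix_apply, mix_apply]
  split_ifs <;> norm_num

lemma apply_true_add_apply_false (v : FinDist Bool) : v.1 true + v.1 false = 1 := by
  have h := v.2
  rwa [Finsupp.sum_fintype _ _ fun _ => rfl, Fintype.sum_bool] at h

lemma ext_bool {v w : FinDist Bool} (h : v.1 true = w.1 true) : v = w := by
  refine ext fun b => ?_
  cases b
  · exact add_left_cancel <| (apply_true_add_apply_false v).trans
      (h ▸ (apply_true_add_apply_false w).symm)
  · exact h

lemma map_not_apply_true (v : FinDist Bool) : (map not v).1 true = v.1 false :=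
  Finsupp.mapDomain_apply Bool.not_injective v.1 false

end FinDist

lemma eq_half_of_quarter_mix {a b c : ℚ≥0} (hab : a + b = 1) (hc : c = 1/2 ∨ c = a ∨ c = b)
    (h : 1/4 * a + 3/4 * b = c) : a = 1/2 := by
  have hab' : (a : ℚ) + b = 1 := by exact_mod_cast hab
  have h' := congrArg ((↑) : ℚ≥0 → ℚ) h
  rw [← NNRat.coe_inj]
  push_cast
  rcases hc with rfl | rfl | rfl <;> push_cast at h' <;> linarith

open FinDist (mix)
open Delay (after)

structure IsDistribLaw (ζ : ∀ X : Type, FinDist (Delay X) → Delay (FinDist X)) : Prop where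
  natural : ∀ (X Y : Type) (f : X → Y) (s : FinDist (Delay X)),
    ζ Y (FinDist.map (Delay.map f) s) = Delay.map (FinDist.map f) (ζ X s)
  pure : ∀ (X : Type) (d : Delay X), ζ X (FinDist.pure d) = Delay.map FinDist.pure d
  now : ∀ (X : Type) (s : FinDist X), ζ X (FinDist.map Delay.now s) = Delay.now s
  mu_findist : ∀ (X : Type) (s : FinDist (FinDist (Delay X))),
    ζ X (FinDist.mu s) = Delay.map FinDist.mu (ζ (FinDist X) (FinDist.map (ζ X) s))
  mu_delay : ∀ (X : Type) (s : FinDist (Delay (Delay X))),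
    ζ X (FinDist.map Delay.mu s) = Delay.mu (Delay.map (ζ X) (ζ (Delay X) s))

namespace IsDistribLaw

variable {ζ : ∀ X : Type, FinDist (Delay X) → Delay (FinDist X)} {X : Type}
  {p q : ℚ≥0} {h : p + q = 1}

lemma exists_apply_mix_same_time (hζ : IsDistribLaw ζ) (n : ℕ) (x y : X) :
    ∃ w, ζ X (mix p q (after n x) (after n y) h) = after n w := by
  have hconst := hζ.natural X X (fun _ => x) (mix p q (after n x) (after n y) h)
  rw [FinDist.map_mix, Delay.map_after, Delay.map_after, FinDist.mix_self, hζ.pure,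
    Delay.map_after, eq_comm, Delay.map_eq_after] at hconst
  exact hconst.imp fun _ => And.left

lemma apply_mix_of_bool (hζ : IsDistribLaw ζ) {n m k : ℕ} {w : FinDist Bool}
    (hb : ζ Bool (mix p q (after n true) (after m false) h) = after k w) (x y : X) :
    ζ X (mix p q (after n x) (after m y) h) = after k (FinDist.map (fun b => cond b x y) w) := by
  have hnat := hζ.natural Bool X (fun b => cond b x y) (mix p q (after n true) (after m false) h)
  rwa [FinDist.map_mix, Delay.map_after, Delay.map_after, cond_true, cond_false, hb,
    Delay.map_after] at hnat

lemma apply_mix_not_of_bool (hζ : IsDistribLaw ζ) {n m k : ℕ} {w : FinDist Bool}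
    (hb : ζ Bool (mix p q (after n true) (after m false) h) = after k w) :
    ζ Bool (mix p q (after n false) (after m true) h) = after k (FinDist.map not w) :=
  hζ.apply_mix_of_bool hb false true

lemma apply_mix_half_bool (hζ : IsDistribLaw ζ) (n : ℕ) :
    ζ Bool (mix (1/2) (1/2) (after n true) (after n false))
      = after n (mix (1/2) (1/2) true false) := by
  obtain ⟨w, hw⟩ := hζ.exists_apply_mix_same_time (h := add_halves 1) n true false
  have hsymm := hζ.apply_mix_not_of_bool hw
  rw [FinDist.mix_comm _ _ (add_halves 1), hw, Delay.after_inj] at hsymm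
  have hwt : w.1 true = 1/2 := by
    have hmass := w.apply_true_add_apply_false
    rw [← FinDist.map_not_apply_true, ← hsymm.2, ← two_mul] at hmass
    exact eq_one_div_of_mul_eq_one_right hmass
  refine hw.trans (congrArg _ (FinDist.ext_bool ?_))
  simp [hwt, FinDist.mix_apply]

lemma apply_mix_half (hζ : IsDistribLaw ζ) (n : ℕ) (x y : X) :
    ζ X (mix (1/2) (1/2) (after n x) (after n y)) = after n (mix (1/2) (1/2) x y) := by
  rw [hζ.apply_mix_of_bool (hζ.apply_mix_half_bool n), FinDist.map_mix, cond_true, cond_false]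

lemma apply_mu_mix (hζ : IsDistribLaw ζ) (s t : FinDist (Delay X)) :
    ζ X (FinDist.mu (mix p q s t h))
      = Delay.map FinDist.mu (ζ (FinDist X) (mix p q (ζ X s) (ζ X t) h)) := by
  rw [hζ.mu_findist, FinDist.map_mix]

lemma apply_mix_quarter (hζ : IsDistribLaw ζ) (n : ℕ) (x y : X) :
    ζ X (mix (1/4) (3/4) (after n x) (after n y)) = after n (mix (1/4) (3/4) x y) := by
  rw [← FinDist.mu_mix_half_mix_half_pure, hζ.apply_mu_mix, hζ.apply_mix_half, hζ.pure,
    Delay.map_after, hζ.apply_mix_half, Delay.map_after, FinDist.mu_mix_half_mix_half_pure]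

lemma apply_mu_mix_of_apply_eq_pure (hζ : IsDistribLaw ζ) {s t : FinDist (Delay X)} {m n : ℕ}
    {x y : X} (hs : ζ X s = after m (FinDist.pure x)) (ht : ζ X t = after n (FinDist.pure y)) :
    ζ X (FinDist.mu (mix p q s t h)) = ζ X (mix p q (after m x) (after n y) h) := by
  rw [hζ.apply_mu_mix, hs, ht, ← Delay.map_after, ← Delay.map_after, ← FinDist.map_mix,
    hζ.natural]
  match ζ X (mix p q (after m x) (after n y) h) with
  | none => rfl
  | some (k, w) => exact congrArg (after k) w.mu_map_pure

lemma exists_apply_mix_one_zero (hζ : IsDistribLaw ζ) (p q : ℚ≥0) (h : p + q = 1) :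
    ∃ k v j z, ζ Bool (mix p q (after 1 true) (after 0 false) h) = after k v ∧
      ζ Bool (FinDist.map (fun b => cond b (after 0 true) (after 1 false)) v) = after j z ∧
      k + j = 1 := by
  obtain ⟨w, hw⟩ := hζ.exists_apply_mix_same_time (h := h) 1 true false
  have hmu := hζ.mu_delay Bool
    (FinDist.map (Delay.map fun b => cond b (after 0 true) (after 1 false))
      (mix p q (after 1 true) (after 0 false) h))
  rw [hζ.natural, FinDist.map_mix, FinDist.map_mix, Delay.map_after, Delay.map_after, cond_true,
    cond_false, Delay.mu_after_after, Delay.mu_after_after, hw, eq_comm, Delay.mu_eq_after] at hmu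
  obtain ⟨k, j, hkj, hsum⟩ := hmu
  obtain ⟨x, hx, hz⟩ := Delay.map_eq_after.mp hkj
  obtain ⟨v, hv, rfl⟩ := Delay.map_eq_after.mp hx
  exact ⟨k, v, j, w, hv, hz, hsum⟩

lemma mass_true_ne_half_of_apply_mix_one_zero (hζ : IsDistribLaw ζ) {k j : ℕ}
    {v z : FinDist Bool}
    (hA : ζ Bool (mix (1/2) (1/2) (after 1 true) (after 0 false)) = after k v)
    (hj : ζ Bool (FinDist.map (fun b => cond b (after 0 true) (after 1 false)) v) = after j z)
    (hkj : k + j = 1) : v.1 true ≠ 1/2 := by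
  intro hv
  have hv' : v = mix (1/2) (1/2) true false := FinDist.ext_bool (by simp [hv, FinDist.mix_apply])
  rw [hv', FinDist.map_mix, cond_true, cond_false, FinDist.mix_comm _ _ (add_halves 1),
    hζ.apply_mix_not_of_bool hA, Delay.after_inj] at hj
  omega

lemma exists_apply_mix_half_of_le_one (hζ : IsDistribLaw ζ) {k k₁ k₂ : ℕ} {v : FinDist Bool}
    (hA : ζ Bool (mix (1/2) (1/2) (after 1 true) (after 0 false)) = after k v)
    (hk₁ : k₁ ≤ 1) (hk₂ : k₂ ≤ 1) :
    ∃ m u, ζ Bool (mix (1/2) (1/2) (after k₁ true) (after k₂ false)) = after m u ∧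
      (u.1 true = 1/2 ∨ u.1 true = v.1 true ∨ u.1 true = v.1 false) := by
  have half : (mix (1/2) (1/2) true false).1 true = 1/2 := by simp [FinDist.mix_apply]
  interval_cases k₁ <;> interval_cases k₂
  · exact ⟨0, _, hζ.apply_mix_half_bool 0, Or.inl half⟩
  · refine ⟨k, FinDist.map not v, ?_, Or.inr (Or.inr v.map_not_apply_true)⟩
    rw [FinDist.mix_comm _ _ (add_halves 1)]
    exact hζ.apply_mix_not_of_bool hA
  · exact ⟨k, v, hA, Or.inr (Or.inl rfl)⟩
  · exact ⟨1, _, hζ.apply_mix_half_bool 1, Or.inl half⟩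

lemma mass_true_eq_half_of_apply_mix_one_zero (hζ : IsDistribLaw ζ) {k : ℕ} {v : FinDist Bool}
    (hA : ζ Bool (mix (1/2) (1/2) (after 1 true) (after 0 false)) = after k v) :
    v.1 true = 1/2 := by
  have viaA : ζ Bool (FinDist.mu (mix (1/4) (3/4)
      (mix (1/2) (1/2) (after 1 true) (after 0 false))
      (mix (1/2) (1/2) (after 1 false) (after 0 true))))
      = after k (FinDist.mu (mix (1/4) (3/4) v (FinDist.map not v))) := by
    rw [hζ.apply_mu_mix, hA, hζ.apply_mix_not_of_bool hA, hζ.apply_mix_quarter, Delay.map_after]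
  obtain ⟨k₁, v₁, j₁, -, h₁, -, hk₁⟩ := hζ.exists_apply_mix_one_zero (1/4) (3/4) (by norm_num)
  obtain ⟨k₂, v₂, j₂, -, h₂, -, hk₂⟩ := hζ.exists_apply_mix_one_zero (3/4) (1/4) (by norm_num)
  have hB₁ : ζ Bool (mix (1/4) (3/4) (after 1 true) (after 0 true))
      = after k₁ (FinDist.pure true) := by
    simp only [hζ.apply_mix_of_bool h₁, Bool.cond_self, FinDist.map_const]
  have hB₂ : ζ Bool (mix (3/4) (1/4) (after 1 false) (after 0 false))
      = after k₂ (FinDist.pure false) := by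
    simp only [hζ.apply_mix_of_bool h₂, Bool.cond_self, FinDist.map_const]
  obtain ⟨m, u, hu, hut⟩ :=
    hζ.exists_apply_mix_half_of_le_one hA (k₁ := k₁) (k₂ := k₂) (by omega) (by omega)
  rw [FinDist.mu_mix_quarter_eq_mu_mix_half, hζ.apply_mu_mix_of_apply_eq_pure hB₁ hB₂, hu,
    Delay.after_inj] at viaA
  have hweight := congrArg (fun w : FinDist Bool => w.1 true) viaA.2
  simp only [FinDist.mu_mix_apply, FinDist.map_not_apply_true] at hweight
  exact eq_half_of_quarter_mix v.apply_true_add_apply_false hut hweight.symm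

end IsDistribLaw

theorem not_isDistribLaw (ζ : ∀ X : Type, FinDist (Delay X) → Delay (FinDist X)) :
    ¬ IsDistribLaw ζ := fun hζ => by
  obtain ⟨k, v, j, z, hA, hj, hkj⟩ := hζ.exists_apply_mix_one_zero (1/2) (1/2) (add_halves 1)
  exact hζ.mass_true_ne_half_of_apply_mix_one_zero hA hj hkj
    (hζ.mass_true_eq_half_of_apply_mix_one_zero hA)

/-- There is no distributive law of the finite (rational) probability distributions monad
(the free convex algebra monad) over the coinductive delay monad: no natural
transformation `ζ : D_f ∘ D → D ∘ D_f` satisfies the two unit axioms and the two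
multiplication axioms of a distributive law. -/
theorem no_distributive_law_findist_over_delay :
    ¬ ∃ ζ : ∀ X : Type, FinDist (Delay X) → Delay (FinDist X),
      -- naturality
      (∀ (X Y : Type) (f : X → Y) (s : FinDist (Delay X)),
          ζ Y (FinDist.map (Delay.map f) s)
            = Delay.map (FinDist.map f) (ζ X s)) ∧
      -- ζ ∘ η^{D_f} D = D η^{D_f}
      (∀ (X : Type) (d : Delay X),
          ζ X (FinDist.pure d) = Delay.map FinDist.pure d) ∧
      -- ζ ∘ D_f η^D = η^D D_f
      (∀ (X : Type) (s : FinDist X),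
          ζ X (FinDist.map Delay.now s) = Delay.now s) ∧
      -- ζ ∘ μ^{D_f} D = D μ^{D_f} ∘ ζ D_f ∘ D_f ζ
      (∀ (X : Type) (s : FinDist (FinDist (Delay X))),
          ζ X (FinDist.mu s)
            = Delay.map FinDist.mu (ζ (FinDist X) (FinDist.map (ζ X) s))) ∧
      -- ζ ∘ D_f μ^D = μ^D D_f ∘ D ζ ∘ ζ D
      (∀ (X : Type) (s : FinDist (Delay (Delay X))),
          ζ X (FinDist.map Delay.mu s)
            = Delay.mu (Delay.map (ζ X) (ζ (Delay X) s))) := by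
  rintro ⟨ζ, natural, pure, now, mu_findist, mu_delay⟩
  exact not_isDistribLaw ζ ⟨natural, pure, now, mu_findist, mu_delay⟩
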